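/- arXiv:2305.17429 — 3 statements merged into one kernel-verified Lean document; each statement's English description precedes it below -/
import Mathlib

section
/- For any vector s ∈ ℝ^n with nonnegative entries, any vector x ∈ ℝ^p with nonnegative entries, and any binary matrix a ∈ {0,1}^{n×p}, we have ∑_{l=1}^n s_l (∑_{m=1}^p a_{l,m} x_m)^2 ≤ (max_{m} ∑_{l=1}^n s_l a_{l,m}) · (∑_{m=1}^p x_m)^2. -/
open Finset

/-
Since every entry of `a` lies in `[0, 1]`, each row sum `∑ m, a l m * x m` is at most `∑ m, x m`, so
one factor of the square can be replaced by `∑ m, x m`. Swapping the order of summation in what remains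
gives `∑ m, (∑ l, s l * a l m) * x m`, and each column weight is bounded by its maximum.
-/

variable {ι κ : Type*} [Fintype ι] [Fintype κ]

theorem sum_mul_le_ciSup_mul_sum (c x : κ → ℝ) (hx : ∀ m, 0 ≤ x m) :
    ∑ m, c m * x m ≤ (⨆ m, c m) * ∑ m, x m := by
  rw [mul_sum]
  exact sum_le_sum fun m _ =>
    mul_le_mul_of_nonneg_right (le_ciSup (Set.finite_range c).bddAbove m) (hx m)

theorem sum_mul_mem_Icc_of_mem_Icc (a x : κ → ℝ) (ha : ∀ m, a m ∈ Set.Icc (0 : ℝ) 1)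
    (hx : ∀ m, 0 ≤ x m) : ∑ m, a m * x m ∈ Set.Icc 0 (∑ m, x m) :=
  ⟨sum_nonneg fun m _ => mul_nonneg (ha m).1 (hx m),
    sum_le_sum fun m _ => mul_le_of_le_one_left (hx m) (ha m).2⟩

theorem sum_mul_sq_le_sum_colSum_mul_mul_sum (s : ι → ℝ) (hs : ∀ l, 0 ≤ s l)
    (x : κ → ℝ) (hx : ∀ m, 0 ≤ x m) (a : ι → κ → ℝ) (ha : ∀ l m, a l m ∈ Set.Icc (0 : ℝ) 1) :
    ∑ l, s l * (∑ m, a l m * x m) ^ 2 ≤ (∑ m, (∑ l, s l * a l m) * x m) * ∑ m, x m :=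
  calc ∑ l, s l * (∑ m, a l m * x m) ^ 2
      ≤ ∑ l, s l * ((∑ m, a l m * x m) * ∑ m, x m) := by
        refine sum_le_sum fun l _ => mul_le_mul_of_nonneg_left ?_ (hs l)
        obtain ⟨h0, h1⟩ := sum_mul_mem_Icc_of_mem_Icc (a l) x (ha l) hx
        rw [sq]
        exact mul_le_mul_of_nonneg_left h1 h0
    _ = (∑ m, (∑ l, s l * a l m) * x m) * ∑ m, x m := by
        generalize ∑ m, x m = S
        simp only [sum_mul, mul_sum]
        rw [sum_comm]
        exact sum_congr rfl fun m _ => sum_congr rfl fun l _ => by ring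

theorem stmt_0_general (n p : ℕ)
    (s : Fin n → ℝ) (hs : ∀ l, 0 ≤ s l)
    (x : Fin p → ℝ) (hx : ∀ m, 0 ≤ x m)
    (a : Fin n → Fin p → ℝ) (ha : ∀ l m, a l m = 0 ∨ a l m = 1) :
    ∑ l, s l * (∑ m, a l m * x m) ^ 2 ≤
      (⨆ m : Fin p, ∑ l, s l * a l m) * (∑ m, x m) ^ 2 := by
  have ha' : ∀ l m, a l m ∈ Set.Icc (0 : ℝ) 1 := fun l m => by
    rcases ha l m with h | h <;> simp [h]
  calc ∑ l, s l * (∑ m, a l m * x m) ^ 2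
      ≤ (∑ m, (∑ l, s l * a l m) * x m) * ∑ m, x m :=
        sum_mul_sq_le_sum_colSum_mul_mul_sum s hs x hx a ha'
    _ ≤ (⨆ m : Fin p, ∑ l, s l * a l m) * (∑ m, x m) * ∑ m, x m :=
        mul_le_mul_of_nonneg_right (sum_mul_le_ciSup_mul_sum _ x hx) (sum_nonneg fun m _ => hx m)
    _ = (⨆ m : Fin p, ∑ l, s l * a l m) * (∑ m, x m) ^ 2 := by ring

theorem stmt_0 (n p : ℕ) (hp : 1 ≤ p)
    (s : Fin n → ℝ) (hs : ∀ l, 0 ≤ s l)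
    (x : Fin p → ℝ) (hx : ∀ m, 0 ≤ x m)
    (a : Fin n → Fin p → ℝ) (ha : ∀ l m, a l m = 0 ∨ a l m = 1) :
    ∑ l, s l * (∑ m, a l m * x m) ^ 2 ≤
      (⨆ m : Fin p, ∑ l, s l * a l m) * (∑ m, x m) ^ 2 :=
  stmt_0_general n p s hs x hx a ha
end

section
/- For any vector s ∈ ℝ^n with nonnegative entries, any vector x ∈ ℝ^p (possibly with negative entries), and any binary matrix a ∈ {0,1}^{n×p}, we have ∑_{l=1}^n s_l (∑_{m=1}^p a_{l,m} x_m)^2 ≤ (max_{m} ∑_{l=1}^n s_l a_{l,m}) · (∑_{m=1}^p |x_m|)^2. -/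
/-! Replacing `x` by `|x|` only increases each `(∑ₘ a_{lm} x_m)²`, and with `0 ≤ a ≤ 1` the
nonnegative row sum `y_l = ∑ₘ a_{lm} |x_m|` is at most `X = ∑ₘ |x_m|`, so `y_l² ≤ y_l X`.
Exchanging the sums, `∑ₗ s_l y_l = ∑ₘ |x_m| ∑ₗ s_l a_{lm} ≤ C X`, where `C` bounds every
column sum. -/

open Finset

section

variable {R ι κ : Type*} [CommRing R] [LinearOrder R] [IsStrictOrderedRing R]
  [Fintype ι] [Fintype κ]

lemma abs_sum_mul_le_sum_mul_abs (a x : κ → R) (ha : ∀ m, 0 ≤ a m) :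
    |∑ m, a m * x m| ≤ ∑ m, a m * |x m| :=
  calc |∑ m, a m * x m| ≤ ∑ m, |a m * x m| := abs_sum_le_sum_abs _ _
    _ = ∑ m, a m * |x m| := by simp only [abs_mul, abs_of_nonneg (ha _)]

lemma sum_mul_abs_le_sum_abs (a x : κ → R) (ha : ∀ m, a m ≤ 1) :
    ∑ m, a m * |x m| ≤ ∑ m, |x m| :=
  sum_le_sum fun m _ => mul_le_of_le_one_left (abs_nonneg _) (ha m)

lemma sq_sum_mul_le (a x : κ → R) (ha₀ : ∀ m, 0 ≤ a m) (ha₁ : ∀ m, a m ≤ 1) :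
    (∑ m, a m * x m) ^ 2 ≤ (∑ m, a m * |x m|) * ∑ m, |x m| := by
  have hy : 0 ≤ ∑ m, a m * |x m| := sum_nonneg fun m _ => mul_nonneg (ha₀ m) (abs_nonneg _)
  calc (∑ m, a m * x m) ^ 2 = |∑ m, a m * x m| ^ 2 := (sq_abs _).symm
    _ ≤ (∑ m, a m * |x m|) ^ 2 :=
      pow_le_pow_left₀ (abs_nonneg _) (abs_sum_mul_le_sum_mul_abs a x ha₀) 2
    _ ≤ (∑ m, a m * |x m|) * ∑ m, |x m| := by
      rw [sq]
      exact mul_le_mul_of_nonneg_left (sum_mul_abs_le_sum_abs a x ha₁) hy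

theorem sum_mul_sq_sum_mul_le (s : ι → R) (hs : ∀ l, 0 ≤ s l) (x : κ → R) (a : ι → κ → R)
    (ha₀ : ∀ l m, 0 ≤ a l m) (ha₁ : ∀ l m, a l m ≤ 1) (C : R)
    (hC : ∀ m, ∑ l, s l * a l m ≤ C) :
    ∑ l, s l * (∑ m, a l m * x m) ^ 2 ≤ C * (∑ m, |x m|) ^ 2 := by
  have hX : 0 ≤ ∑ m, |x m| := sum_nonneg fun m _ => abs_nonneg _
  calc ∑ l, s l * (∑ m, a l m * x m) ^ 2
      ≤ ∑ l, s l * ((∑ m, a l m * |x m|) * ∑ m, |x m|) :=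
        sum_le_sum fun l _ => mul_le_mul_of_nonneg_left (sq_sum_mul_le _ x (ha₀ l) (ha₁ l)) (hs l)
    _ = (∑ l, s l * ∑ m, a l m * |x m|) * ∑ m, |x m| := by simp only [sum_mul, mul_assoc]
    _ = (∑ m, |x m| * ∑ l, s l * a l m) * ∑ m, |x m| := by
        congr 1
        simp only [mul_sum]
        rw [sum_comm]
        exact sum_congr rfl fun m _ => sum_congr rfl fun l _ => by ring
    _ ≤ (∑ m, |x m| * C) * ∑ m, |x m| := by
        gcongr with m
        exact hC m
    _ = C * (∑ m, |x m|) ^ 2 := by rw [← sum_mul, sq]; ring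

end

theorem stmt_1_general (n p : ℕ)
    (s : Fin n → ℝ) (hs : ∀ l, 0 ≤ s l)
    (x : Fin p → ℝ)
    (a : Fin n → Fin p → ℝ) (ha : ∀ l m, a l m = 0 ∨ a l m = 1) :
    ∑ l, s l * (∑ m, a l m * x m) ^ 2 ≤
      (⨆ m : Fin p, ∑ l, s l * a l m) * (∑ m, |x m|) ^ 2 := by
  refine sum_mul_sq_sum_mul_le s hs x a (fun l m => ?_) (fun l m => ?_) _
    fun m => le_ciSup (f := fun m => ∑ l, s l * a l m) (Set.finite_range _).bddAbove m
  all_goals rcases ha l m with h | h <;> simp [h]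

theorem stmt_1 (n p : ℕ) (hp : 1 ≤ p)
    (s : Fin n → ℝ) (hs : ∀ l, 0 ≤ s l)
    (x : Fin p → ℝ)
    (a : Fin n → Fin p → ℝ) (ha : ∀ l m, a l m = 0 ∨ a l m = 1) :
    ∑ l, s l * (∑ m, a l m * x m) ^ 2 ≤
      (⨆ m : Fin p, ∑ l, s l * a l m) * (∑ m, |x m|) ^ 2 :=
  stmt_1_general n p s hs x a ha
end

section
/- If σ < 1/(2 ln 2 · √(2 ln p)) for p ≥ 2, q_a ∈ (0,1], and n ≤ p with n ≥ 2, then σ satisfies σ < (1/(√2 · ln(1+q_a))) · (ln(1/(1−(1−p^{−3})^{1/n})))^{−1/2}, i.e., κ√(2g(3 ln p)) < 1 where κ = σ ln(1+q_a) and g(θ) = ln(1/(1−(1−e^{−θ})^{1/n})). -/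
/-!
Write `t = p⁻³`. Bernoulli's inequality `(1 - t) ^ (1/n) ≤ 1 - t/n` gives
`1 - (1 - t) ^ (1/n) ≥ t/n ≥ p⁻⁴` because `n ≤ p`, hence `g(3 ln p) ≤ 4 ln p`.
With `ln (1 + q_a) ≤ ln 2` this yields `κ √(2 g) ≤ σ ln 2 √(8 ln p) = 2 σ ln 2 √(2 ln p) < 1`.
-/

open Real

section RootGap

variable {n : ℕ} {t : ℝ}

lemma div_le_one_sub_one_sub_rpow (hn : n ≠ 0) (ht1 : t ≤ 1) :
    t / n ≤ 1 - (1 - t) ^ ((1 : ℝ) / n) := by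
  have hn1 : (1 : ℝ) ≤ n := by exact_mod_cast Nat.one_le_iff_ne_zero.mpr hn
  have hbernoulli := rpow_one_add_le_one_add_mul_self (s := -t) (by linarith)
    (p := 1 / n) (by positivity) (div_le_one_of_le₀ hn1 (by positivity))
  rw [← sub_eq_add_neg] at hbernoulli
  linarith [show 1 / (n : ℝ) * -t = -(t / n) by ring]

lemma one_sub_one_sub_rpow_mem_Ioo (hn : n ≠ 0) (ht0 : 0 < t) (ht1 : t < 1) :
    1 - (1 - t) ^ ((1 : ℝ) / n) ∈ Set.Ioo 0 1 := by
  have hpos : 0 < (1 - t) ^ ((1 : ℝ) / n) := rpow_pos_of_pos (by linarith) _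
  have hlt : (1 - t) ^ ((1 : ℝ) / n) < 1 :=
    rpow_lt_one (by linarith) (by linarith) (by positivity)
  constructor <;> linarith

lemma log_one_div_one_sub_one_sub_rpow_pos (hn : n ≠ 0) (ht0 : 0 < t) (ht1 : t < 1) :
    0 < log (1 / (1 - (1 - t) ^ ((1 : ℝ) / n))) := by
  obtain ⟨hpos, hlt⟩ := one_sub_one_sub_rpow_mem_Ioo hn ht0 ht1
  exact log_pos (one_lt_one_div hpos hlt)

lemma log_one_div_one_sub_one_sub_rpow_le (hn : n ≠ 0) (ht0 : 0 < t) (ht1 : t < 1) :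
    log (1 / (1 - (1 - t) ^ ((1 : ℝ) / n))) ≤ log (n / t) := by
  obtain ⟨hpos, -⟩ := one_sub_one_sub_rpow_mem_Ioo hn ht0 ht1
  apply log_le_log (by positivity)
  rw [div_le_div_iff₀ hpos ht0, one_mul, ← div_le_iff₀' (by positivity)]
  exact div_le_one_sub_one_sub_rpow hn ht1.le

end RootGap

lemma log_one_div_one_sub_one_sub_one_div_pow_three_rpow_mem_Ioc {p n : ℕ} (hp : 1 < p)
    (hn : n ≠ 0) (hnp : n ≤ p) :
    log (1 / (1 - (1 - 1 / (p : ℝ) ^ 3) ^ ((1 : ℝ) / n))) ∈ Set.Ioc 0 (4 * log p) := by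
  have hp1 : (1 : ℝ) < p := by exact_mod_cast hp
  have hnp' : (n : ℝ) ≤ p := by exact_mod_cast hnp
  have hn0 : (0 : ℝ) < n := by exact_mod_cast Nat.pos_of_ne_zero hn
  have ht1 : 1 / (p : ℝ) ^ 3 < 1 := (div_lt_one (by positivity)).mpr (one_lt_pow₀ hp1 (by norm_num))
  refine ⟨log_one_div_one_sub_one_sub_rpow_pos hn (by positivity) ht1, ?_⟩
  calc log (1 / (1 - (1 - 1 / (p : ℝ) ^ 3) ^ ((1 : ℝ) / n)))
      ≤ log (n / (1 / (p : ℝ) ^ 3)) := log_one_div_one_sub_one_sub_rpow_le hn (by positivity) ht1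
    _ ≤ log ((p : ℝ) ^ 4) := by
        apply log_le_log (by positivity)
        rw [one_div, div_inv_eq_mul, show (p : ℝ) ^ 4 = p * p ^ 3 by ring]
        exact mul_le_mul_of_nonneg_right hnp' (by positivity)
    _ = 4 * log p := by rw [log_pow]; norm_num

lemma sqrt_two_mul_le_two_mul_sqrt {g l : ℝ} (h : g ≤ 4 * l) :
    √(2 * g) ≤ 2 * √(2 * l) := by
  calc √(2 * g) ≤ √(2 ^ 2 * (2 * l)) := sqrt_le_sqrt (by linarith)
    _ = 2 * √(2 * l) := by rw [sqrt_mul (by norm_num), sqrt_sq (by norm_num)]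

theorem stmt_11 (p n : ℕ) (hp : 2 ≤ p) (hn : 2 ≤ n) (hnp : n ≤ p)
    (qa : ℝ) (hqa : qa ∈ Set.Ioc (0 : ℝ) 1) (σ : ℝ) (hσ : 0 < σ)
    (hbound : σ < 1 / (2 * Real.log 2 * Real.sqrt (2 * Real.log p))) :
    σ < 1 / (Real.sqrt 2 * Real.log (1 + qa)) *
        (Real.sqrt (Real.log (1 / (1 - (1 - 1 / (p : ℝ) ^ 3) ^ ((1 : ℝ) / n)))))⁻¹ ∧
    σ * Real.log (1 + qa) *
        Real.sqrt (2 * Real.log (1 / (1 - (1 - 1 / (p : ℝ) ^ 3) ^ ((1 : ℝ) / n)))) < 1 := by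
  obtain ⟨hqa0, hqa1⟩ := hqa
  set g := log (1 / (1 - (1 - 1 / (p : ℝ) ^ 3) ^ ((1 : ℝ) / n)))
  obtain ⟨hg0, hg⟩ : g ∈ Set.Ioc 0 (4 * log p) :=
    log_one_div_one_sub_one_sub_one_div_pow_three_rpow_mem_Ioc (by omega) (by omega) hnp
  have hsqrt := sqrt_two_mul_le_two_mul_sqrt hg
  have hL0 : 0 < log (1 + qa) := log_pos (by linarith)
  have hL2 : log (1 + qa) ≤ log 2 := log_le_log (by linarith) (by linarith)
  have hlogp : 0 < log p := log_pos (by exact_mod_cast hp)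
  have hbound' : σ * (2 * log 2 * √(2 * log p)) < 1 := by
    rwa [lt_div_iff₀ (by positivity)] at hbound
  have hkappa : σ * log (1 + qa) * √(2 * g) < 1 :=
    calc σ * log (1 + qa) * √(2 * g) ≤ σ * log 2 * (2 * √(2 * log p)) := by gcongr
      _ = σ * (2 * log 2 * √(2 * log p)) := by ring
      _ < 1 := hbound'
  refine ⟨?_, hkappa⟩
  rw [sqrt_mul zero_le_two] at hkappa
  rw [one_div, ← mul_inv, ← one_div, lt_div_iff₀ (by positivity)]
  linarith
end
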